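/- arXiv:1311.7007 — 2 statements merged into one kernel-verified Lean document; each statement's English description precedes it below -/
import Mathlib

section
/- Let m > 1, α ∈ (0,1), T > 0, and let Ω ⊂ ℝ be a bounded open set. Let v : ℝ × [0,T] → ℝ and Φ : ℝ × [0,T] → ℝ be bounded and continuous, twice continuously differentiable in x with bounded second derivatives and continuously differentiable in t on ℝ × (0,T]. Assume: (i) ∂_t v(x,t) + |∂_x v(x,t)|^(m−1) · L_α v(·,t)(x) ≥ 0 for all x ∈ ℝ and t ∈ (0,T] (v is a classical supersolution); (ii) ∂_t Φ(x,t) + |∂_x Φ(x,t)|^(m−1) · L_α Φ(·,t)(x) < 0 for all x ∈ Ω and t ∈ (0,T] (Φ is a strict classical subsolution on Ω); (iii) Φ(x,0) < v(x,0) for all x ∈ ℝ (comparison at initial time); (iv) Φ(x,t) < v(x,t) for all x ∈ ℝ ∖ Ω and t ∈ (0,T] (comparison on the parabolic boundary). Then Φ(x,t) ≤ v(x,t) for all x ∈ ℝ and t ∈ [0,T]. -/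
/-!
If `Φ ≤ v` fails, let `t₀` be the first time at which `Φ - v` reaches `0`; it exists because `Ω`
is bounded, and since `Φ - v < 0` on the parabolic boundary the touching point `x₀` lies in
`Ω × (0, T]`. There `Φ(·, t₀) ≤ v(·, t₀)` touches from below, so the spatial derivatives agree,
`2Φ(x₀) - Φ(x₀ ± z) ≥ 2v(x₀) - v(x₀ ± z)` gives `L_α v ≤ L_α Φ`, and `Φ - v < 0` before `t₀`
gives `∂_t v ≤ ∂_t Φ`. The supersolution inequality for `v` then contradicts the strict
subsolution inequality for `Φ`.
-/

open MeasureTheory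

noncomputable def fracLap (α : ℝ) (f : ℝ → ℝ) (x : ℝ) : ℝ :=
  ∫ z in Set.Ioi (0 : ℝ), (2 * f x - f (x + z) - f (x - z)) / z ^ (1 + 2 * α)

open Set Filter Topology

theorem abs_second_difference_le {f : ℝ → ℝ} (hf : ContDiff ℝ 2 f) {x r K : ℝ}
    (hK : ∀ y ∈ Icc (x - r) (x + r), |deriv (deriv f) y| ≤ K) {z : ℝ} (hz : |z| ≤ r) :
    |2 * f x - f (x + z) - f (x - z)| ≤ 2 * K * z ^ 2 := by
  have hf' : Differentiable ℝ (deriv f) :=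
    (contDiff_succ_iff_deriv.mp (hf : ContDiff ℝ (1 + 1) f)).2.2.differentiable one_ne_zero
  have hlip : ∀ a ∈ Icc (x - r) (x + r), ∀ b ∈ Icc (x - r) (x + r),
      |deriv f a - deriv f b| ≤ K * |a - b| := fun a ha b hb =>
    (convex_Icc _ _).norm_image_sub_le_of_norm_deriv_le (fun y _ => hf' y) hK hb ha
  have hr : 0 ≤ r := (abs_nonneg z).trans hz
  have hK0 : 0 ≤ K := (abs_nonneg _).trans (hK x ⟨by linarith, by linarith⟩)
  set g : ℝ → ℝ := fun w => f (x + w) + f (x - w)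
  have hg : ∀ w, HasDerivAt g (deriv f (x + w) - deriv f (x - w)) w := fun w =>
    (((hf.differentiable two_ne_zero _).hasDerivAt.comp_const_add x w).add
      ((hf.differentiable two_ne_zero _).hasDerivAt.comp_const_sub x w)).congr_deriv (by ring)
  have hbound : ∀ w ∈ uIcc 0 z, ‖deriv g w‖ ≤ 2 * K * |z| := by
    intro w hw
    have hwz : |w| ≤ |z| := by
      rcases mem_uIcc.mp hw with h | h
      · rw [abs_of_nonneg h.1, abs_of_nonneg (h.1.trans h.2)]; exact h.2
      · rw [abs_of_nonpos h.2, abs_of_nonpos (h.1.trans h.2)]; linarith [h.1]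
    have hw₁ := abs_le.mp (hwz.trans hz)
    rw [(hg w).deriv, Real.norm_eq_abs]
    calc |deriv f (x + w) - deriv f (x - w)| ≤ K * |(x + w) - (x - w)| :=
          hlip _ ⟨by linarith, by linarith⟩ _ ⟨by linarith, by linarith⟩
      _ = 2 * K * |w| := by rw [show x + w - (x - w) = 2 * w by ring, abs_mul, abs_two]; ring
      _ ≤ 2 * K * |z| := by gcongr
  have hmvt := (convex_uIcc (0 : ℝ) z).norm_image_sub_le_of_norm_deriv_le
    (fun w _ => (hg w).differentiableAt) hbound left_mem_uIcc right_mem_uIcc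
  calc |2 * f x - f (x + z) - f (x - z)| = ‖g z - g 0‖ := by
        rw [Real.norm_eq_abs, ← abs_neg]; simp only [g, add_zero, sub_zero]; ring_nf
    _ ≤ 2 * K * |z| * ‖z - 0‖ := hmvt
    _ = 2 * K * z ^ 2 := by rw [sub_zero, Real.norm_eq_abs, mul_assoc, ← sq, sq_abs]

theorem ContDiff.exists_abs_second_difference_le {f : ℝ → ℝ} (hf : ContDiff ℝ 2 f) (x r : ℝ) :
    ∃ K, ∀ z, |z| ≤ r → |2 * f x - f (x + z) - f (x - z)| ≤ K * z ^ 2 := by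
  have hf' : ContDiff ℝ 1 (deriv f) := (contDiff_succ_iff_deriv.mp (hf : ContDiff ℝ (1 + 1) f)).2.2
  obtain ⟨K, hK⟩ := (isCompact_Icc : IsCompact (Icc (x - r) (x + r))).exists_bound_of_continuousOn
    (hf'.continuous_deriv le_rfl).continuousOn
  exact ⟨2 * K, fun z hz => abs_second_difference_le hf hK hz⟩

theorem Continuous.continuousOn_div_rpow {g : ℝ → ℝ} (hg : Continuous g) (s : ℝ) :
    ContinuousOn (fun z => g z / z ^ s) (Ioi 0) :=
  hg.continuousOn.div (continuousOn_id.rpow_const fun _ hz => Or.inl (ne_of_gt hz))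
    fun _ hz => (Real.rpow_pos_of_pos hz s).ne'

theorem integrableOn_Ioc_div_rpow_of_abs_le_sq {g : ℝ → ℝ} {K s : ℝ} (hs : s < 3)
    (hg : Continuous g) (hK : ∀ z ∈ Ioc (0 : ℝ) 1, |g z| ≤ K * z ^ 2) :
    IntegrableOn (fun z => g z / z ^ s) (Ioc 0 1) := by
  have hdom : IntegrableOn (fun z : ℝ => K * z ^ (2 - s)) (Ioc 0 1) :=
    ((intervalIntegrable_iff_integrableOn_Ioc_of_le zero_le_one).mp
      (intervalIntegral.intervalIntegrable_rpow' (by linarith))).const_mul K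
  refine hdom.mono' (((hg.continuousOn_div_rpow s).mono Ioc_subset_Ioi_self).aestronglyMeasurable
    measurableSet_Ioc) ?_
  filter_upwards [ae_restrict_mem measurableSet_Ioc] with z hz
  have hzs := Real.rpow_pos_of_pos hz.1 s
  rw [Real.norm_eq_abs, abs_div, abs_of_pos hzs, div_le_iff₀ hzs, mul_assoc,
    ← Real.rpow_add hz.1, sub_add_cancel, Real.rpow_two]
  exact hK z hz

theorem integrableOn_Ioi_div_rpow_of_abs_le {g : ℝ → ℝ} {M s : ℝ} (hs : 1 < s)
    (hg : Continuous g) (hM : ∀ z, |g z| ≤ M) :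
    IntegrableOn (fun z => g z / z ^ s) (Ioi 1) := by
  have hdom : IntegrableOn (fun z : ℝ => M * z ^ (-s)) (Ioi 1) :=
    (integrableOn_Ioi_rpow_of_lt (by linarith) one_pos).const_mul M
  refine hdom.mono' (((hg.continuousOn_div_rpow s).mono (Ioi_subset_Ioi zero_le_one)
    ).aestronglyMeasurable measurableSet_Ioi) ?_
  filter_upwards [ae_restrict_mem measurableSet_Ioi] with z hz
  have hz₀ : 0 < z := one_pos.trans hz
  rw [Real.norm_eq_abs, abs_div, abs_of_pos (Real.rpow_pos_of_pos hz₀ s), div_eq_mul_inv,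
    ← Real.rpow_neg hz₀.le]
  exact mul_le_mul_of_nonneg_right (hM z) (Real.rpow_nonneg hz₀.le _)

/-- `fracLap` is a Bochner integral, hence `0` for a non-integrable integrand: integrability is
what lets pointwise comparisons of the integrands pass to `fracLap`. -/
theorem integrableOn_fracLap_integrand {α : ℝ} (hα : α ∈ Ioo (0 : ℝ) 1) {f : ℝ → ℝ}
    (hf : ContDiff ℝ 2 f) {M : ℝ} (hM : ∀ y, |f y| ≤ M) (x : ℝ) :
    IntegrableOn (fun z => (2 * f x - f (x + z) - f (x - z)) / z ^ (1 + 2 * α)) (Ioi 0) := by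
  have hcont : Continuous fun z => 2 * f x - f (x + z) - f (x - z) := by
    have := hf.continuous; fun_prop
  obtain ⟨K, hK⟩ := hf.exists_abs_second_difference_le x 1
  rw [← Ioc_union_Ioi_eq_Ioi zero_le_one]
  refine (integrableOn_Ioc_div_rpow_of_abs_le_sq (by linarith [hα.2]) hcont
    fun z hz => hK z ?_).union
    (integrableOn_Ioi_div_rpow_of_abs_le (M := 4 * M) (by linarith [hα.1]) hcont fun z => ?_)
  · rw [abs_of_pos hz.1]; exact hz.2
  · have := abs_le.mp (hM x); have := abs_le.mp (hM (x + z)); have := abs_le.mp (hM (x - z))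
    rw [abs_le]; constructor <;> linarith

theorem fracLap_le_of_le_of_eq {α : ℝ} {f g : ℝ → ℝ} {x : ℝ}
    (hf : IntegrableOn (fun z => (2 * f x - f (x + z) - f (x - z)) / z ^ (1 + 2 * α)) (Ioi 0))
    (hg : IntegrableOn (fun z => (2 * g x - g (x + z) - g (x - z)) / z ^ (1 + 2 * α)) (Ioi 0))
    (hle : ∀ y, f y ≤ g y) (heq : f x = g x) : fracLap α g x ≤ fracLap α f x := by
  refine setIntegral_mono_on hg hf measurableSet_Ioi fun z hz =>
    div_le_div_of_nonneg_right ?_ (Real.rpow_nonneg (le_of_lt hz) _)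
  linarith [hle (x + z), hle (x - z)]

theorem deriv_eq_deriv_of_eventuallyLE_of_eq {f g : ℝ → ℝ} {x : ℝ}
    (hf : DifferentiableAt ℝ f x) (hg : DifferentiableAt ℝ g x) (hle : f ≤ᶠ[𝓝 x] g)
    (heq : f x = g x) : deriv f x = deriv g x := by
  have hmax : IsLocalMax (fun y => f y - g y) x := by
    filter_upwards [hle] with y hy
    linarith
  have := hmax.deriv_eq_zero
  rw [deriv_fun_sub hf hg] at this
  linarith

theorem deriv_le_deriv_of_eventuallyLE_nhdsLT_of_eq {f g : ℝ → ℝ} {a : ℝ}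
    (hf : DifferentiableAt ℝ f a) (hg : DifferentiableAt ℝ g a) (hle : f ≤ᶠ[𝓝[<] a] g)
    (heq : f a = g a) : deriv g a ≤ deriv f a := by
  have hslope := hasDerivAt_iff_tendsto_slope.mp (hf.fun_sub hg).hasDerivAt
  have hnonneg : 0 ≤ deriv (fun t => f t - g t) a := by
    refine ge_of_tendsto (hslope.mono_left (nhdsLT_le_nhdsNE a)) ?_
    filter_upwards [hle, self_mem_nhdsWithin] with t ht hta
    rw [slope_def_field]
    exact div_nonneg_of_nonpos (by linarith) (sub_nonpos.mpr (le_of_lt hta))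
  rw [deriv_fun_sub hf hg] at hnonneg
  linarith

theorem exists_first_touching {u : ℝ → ℝ → ℝ} {T : ℝ} {Ω : Set ℝ}
    (hΩ : Bornology.IsBounded Ω)
    (hu : ContinuousOn (fun p : ℝ × ℝ => u p.1 p.2) (univ ×ˢ Icc 0 T))
    (hinit : ∀ x, u x 0 < 0) (hbdry : ∀ x ∉ Ω, ∀ t ∈ Ioc 0 T, u x t < 0)
    {x₁ t₁ : ℝ} (ht₁ : t₁ ∈ Icc 0 T) (hx₁ : 0 ≤ u x₁ t₁) :
    ∃ x₀ ∈ Ω, ∃ t₀ ∈ Ioc 0 T, u x₀ t₀ = 0 ∧ (∀ x, u x t₀ ≤ 0) ∧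
      ∀ x, ∀ t ∈ Ico 0 t₀, u x t < 0 := by
  have hinterior : ∀ x, ∀ t ∈ Icc 0 T, 0 ≤ u x t → x ∈ Ω ∧ t ∈ Ioc 0 T := by
    intro x t ht hxt
    have ht₀ : 0 < t := ht.1.lt_of_ne fun h => (hxt.trans_lt (h ▸ hinit x)).false
    exact ⟨by_contra fun hx => (hxt.trans_lt (hbdry x hx t ⟨ht₀, ht.2⟩)).false, ht₀, ht.2⟩
  set S := (univ ×ˢ Icc 0 T) ∩ (fun p : ℝ × ℝ => u p.1 p.2) ⁻¹' Ici 0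
  have hS : IsCompact S := by
    refine (hΩ.isCompact_closure.prod (isCompact_Icc (a := 0) (b := T))).of_isClosed_subset
      (hu.preimage_isClosed_of_isClosed (isClosed_univ.prod isClosed_Icc) isClosed_Ici) ?_
    rintro ⟨x, t⟩ ⟨⟨-, ht⟩, hxt⟩
    exact ⟨subset_closure (hinterior x t ht hxt).1, ht⟩
  obtain ⟨⟨x₀, t₀⟩, ⟨⟨-, ht₀⟩, hx₀t₀⟩, hmin⟩ :=
    hS.exists_isMinOn ⟨(x₁, t₁), ⟨trivial, ht₁⟩, hx₁⟩ continuous_snd.continuousOn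
  obtain ⟨hx₀, ht₀'⟩ := hinterior x₀ t₀ ht₀ hx₀t₀
  have hbefore : ∀ x, ∀ t ∈ Ico 0 t₀, u x t < 0 := fun x t ht =>
    lt_of_not_ge fun hxt =>
      ht.2.not_ge (hmin (a := (x, t)) ⟨⟨trivial, ht.1, ht.2.le.trans ht₀.2⟩, hxt⟩)
  have hat : ∀ x, u x t₀ ≤ 0 := by
    intro x
    have hcont : ContinuousWithinAt (u x) (Ico 0 t₀) t₀ :=
      ((hu.comp (Continuous.prodMk_right x).continuousOn fun t ht => ⟨trivial, ht⟩) t₀ ht₀).mono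
        fun t ht => ⟨ht.1, ht.2.le.trans ht₀.2⟩
    refine hcont.closure_le (by rw [closure_Ico ht₀'.1.ne]; exact right_mem_Icc.mpr ht₀.1)
      continuousWithinAt_const fun t ht => (hbefore x t ht).le
  exact ⟨x₀, hx₀, t₀, ht₀', le_antisymm (hat x₀) hx₀t₀, hat, hbefore⟩

theorem parabolic_comparison_general (m α T : ℝ) (hα : α ∈ Set.Ioo (0 : ℝ) 1)
    (Ω : Set ℝ) (hΩb : Bornology.IsBounded Ω)
    (v Φ : ℝ → ℝ → ℝ)
    -- regularity of v
    (hvb : ∃ M, ∀ x : ℝ, ∀ t ∈ Set.Icc (0 : ℝ) T, |v x t| ≤ M)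
    (hvc : ContinuousOn (fun p : ℝ × ℝ => v p.1 p.2) (Set.univ ×ˢ Set.Icc (0 : ℝ) T))
    (hvx : ∀ t ∈ Set.Ioc (0 : ℝ) T, ContDiff ℝ 2 (fun x => v x t))
    (hvt : ∀ x : ℝ, ∀ t ∈ Set.Ioc (0 : ℝ) T, DifferentiableAt ℝ (v x) t)
    -- regularity of Φ
    (hΦb : ∃ M, ∀ x : ℝ, ∀ t ∈ Set.Icc (0 : ℝ) T, |Φ x t| ≤ M)
    (hΦc : ContinuousOn (fun p : ℝ × ℝ => Φ p.1 p.2) (Set.univ ×ˢ Set.Icc (0 : ℝ) T))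
    (hΦx : ∀ t ∈ Set.Ioc (0 : ℝ) T, ContDiff ℝ 2 (fun x => Φ x t))
    (hΦt : ∀ x : ℝ, ∀ t ∈ Set.Ioc (0 : ℝ) T, DifferentiableAt ℝ (Φ x) t)
    -- (i) v is a classical supersolution
    (hsuper : ∀ x : ℝ, ∀ t ∈ Set.Ioc (0 : ℝ) T,
      0 ≤ deriv (v x) t + |deriv (fun y => v y t) x| ^ (m - 1) * fracLap α (fun y => v y t) x)
    -- (ii) Φ is a strict classical subsolution on Ω
    (hsub : ∀ x ∈ Ω, ∀ t ∈ Set.Ioc (0 : ℝ) T,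
      deriv (Φ x) t + |deriv (fun y => Φ y t) x| ^ (m - 1) * fracLap α (fun y => Φ y t) x < 0)
    -- (iii) comparison at initial time
    (hinit : ∀ x : ℝ, Φ x 0 < v x 0)
    -- (iv) comparison on the parabolic boundary
    (hbdry : ∀ x : ℝ, x ∉ Ω → ∀ t ∈ Set.Ioc (0 : ℝ) T, Φ x t < v x t) :
    ∀ x : ℝ, ∀ t ∈ Set.Icc (0 : ℝ) T, Φ x t ≤ v x t := by
  by_contra! hcon
  obtain ⟨x₁, t₁, ht₁, hlt₁⟩ := hcon
  obtain ⟨x₀, hx₀, t₀, ht₀, htouch, hmax, hbefore⟩ :=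
    exists_first_touching (u := fun x t => Φ x t - v x t) hΩb (hΦc.sub hvc)
      (fun x => sub_neg.mpr (hinit x)) (fun x hx t ht => sub_neg.mpr (hbdry x hx t ht))
      ht₁ (sub_nonneg.mpr hlt₁.le)
  have hle : ∀ y, Φ y t₀ ≤ v y t₀ := fun y => sub_nonpos.mp (hmax y)
  have heq : Φ x₀ t₀ = v x₀ t₀ := sub_eq_zero.mp htouch
  have hx : deriv (fun y => Φ y t₀) x₀ = deriv (fun y => v y t₀) x₀ :=
    deriv_eq_deriv_of_eventuallyLE_of_eq ((hΦx t₀ ht₀).differentiable two_ne_zero x₀)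
      ((hvx t₀ ht₀).differentiable two_ne_zero x₀) (Eventually.of_forall hle) heq
  have ht : deriv (v x₀) t₀ ≤ deriv (Φ x₀) t₀ := by
    refine deriv_le_deriv_of_eventuallyLE_nhdsLT_of_eq (hΦt x₀ t₀ ht₀) (hvt x₀ t₀ ht₀) ?_ heq
    filter_upwards [Ioo_mem_nhdsLT ht₀.1] with t ht
    exact sub_neg.mp (hbefore x₀ t ⟨ht.1.le, ht.2⟩) |>.le
  have hL : fracLap α (fun y => v y t₀) x₀ ≤ fracLap α (fun y => Φ y t₀) x₀ := by
    obtain ⟨Mv, hMv⟩ := hvb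
    obtain ⟨MΦ, hMΦ⟩ := hΦb
    have ht₀' := Ioc_subset_Icc_self ht₀
    exact fracLap_le_of_le_of_eq
      (integrableOn_fracLap_integrand hα (hΦx t₀ ht₀) (fun y => hMΦ y t₀ ht₀') x₀)
      (integrableOn_fracLap_integrand hα (hvx t₀ ht₀) (fun y => hMv y t₀ ht₀') x₀) hle heq
  refine (hsub x₀ hx₀ t₀ ht₀).not_ge ((hsuper x₀ t₀ ht₀).trans ?_)
  rw [← hx]
  gcongr

/-- Parabolic comparison principle for the integrated equation
`∂_t v + |∂_x v|^(m−1) L_α v = 0`: if `v` is a bounded classical supersolution on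
`ℝ × (0,T]`, `Φ` is a strict classical subsolution on `Ω × (0,T]` for a bounded open
set `Ω ⊆ ℝ`, `Φ < v` at the initial time and on `(ℝ ∖ Ω) × (0,T]`, then `Φ ≤ v` on
`ℝ × [0,T]`. -/
theorem parabolic_comparison (m α T : ℝ) (hm : 1 < m) (hα : α ∈ Set.Ioo (0 : ℝ) 1)
    (hT : 0 < T) (Ω : Set ℝ) (hΩo : IsOpen Ω) (hΩb : Bornology.IsBounded Ω)
    (v Φ : ℝ → ℝ → ℝ)
    -- regularity of v
    (hvb : ∃ M, ∀ x : ℝ, ∀ t ∈ Set.Icc (0 : ℝ) T, |v x t| ≤ M)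
    (hvc : ContinuousOn (fun p : ℝ × ℝ => v p.1 p.2) (Set.univ ×ˢ Set.Icc (0 : ℝ) T))
    (hvx : ∀ t ∈ Set.Ioc (0 : ℝ) T, ContDiff ℝ 2 (fun x => v x t))
    (hvxx : ∃ K, ∀ x : ℝ, ∀ t ∈ Set.Ioc (0 : ℝ) T, |deriv (deriv (fun x => v x t)) x| ≤ K)
    (hvt : ∀ x : ℝ, ∀ t ∈ Set.Ioc (0 : ℝ) T, DifferentiableAt ℝ (v x) t)
    -- regularity of Φ
    (hΦb : ∃ M, ∀ x : ℝ, ∀ t ∈ Set.Icc (0 : ℝ) T, |Φ x t| ≤ M)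
    (hΦc : ContinuousOn (fun p : ℝ × ℝ => Φ p.1 p.2) (Set.univ ×ˢ Set.Icc (0 : ℝ) T))
    (hΦx : ∀ t ∈ Set.Ioc (0 : ℝ) T, ContDiff ℝ 2 (fun x => Φ x t))
    (hΦxx : ∃ K, ∀ x : ℝ, ∀ t ∈ Set.Ioc (0 : ℝ) T, |deriv (deriv (fun x => Φ x t)) x| ≤ K)
    (hΦt : ∀ x : ℝ, ∀ t ∈ Set.Ioc (0 : ℝ) T, DifferentiableAt ℝ (Φ x) t)
    -- (i) v is a classical supersolution
    (hsuper : ∀ x : ℝ, ∀ t ∈ Set.Ioc (0 : ℝ) T,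
      0 ≤ deriv (v x) t + |deriv (fun y => v y t) x| ^ (m - 1) * fracLap α (fun y => v y t) x)
    -- (ii) Φ is a strict classical subsolution on Ω
    (hsub : ∀ x ∈ Ω, ∀ t ∈ Set.Ioc (0 : ℝ) T,
      deriv (Φ x) t + |deriv (fun y => Φ y t) x| ^ (m - 1) * fracLap α (fun y => Φ y t) x < 0)
    -- (iii) comparison at initial time
    (hinit : ∀ x : ℝ, Φ x 0 < v x 0)
    -- (iv) comparison on the parabolic boundary
    (hbdry : ∀ x : ℝ, x ∉ Ω → ∀ t ∈ Set.Ioc (0 : ℝ) T, Φ x t < v x t) :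
    ∀ x : ℝ, ∀ t ∈ Set.Icc (0 : ℝ) T, Φ x t ≤ v x t :=
  parabolic_comparison_general m α T hα Ω hΩb v Φ hvb hvc hvx hvt hΦb hΦc hΦx hΦt hsuper hsub hinit
    hbdry
end

section
/- Let N ≥ 1 be an integer and let a, b be positive real numbers with a + b < N. Then there exists a constant C > 0, depending only on N, a and b, such that for all x, y ∈ ℝ^N with x ≠ y, the function z ↦ ‖x − z‖^(a−N) · ‖z − y‖^(b−N) is integrable on ℝ^N and ∫_{ℝ^N} ‖x − z‖^(a−N) ‖z − y‖^(b−N) dz = C · ‖x − y‖^(a+b−N). -/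
/-!
Write `α = a - N`, `β = b - N` and `d = N`. Where `z` is at least as close to `y` as to `x`, the
triangle inequality gives `‖x - z‖ ≥ max r ‖z - y‖` with `r = ‖x - y‖ / 2`, so (as `α ≤ 0`) the
integrand is dominated by `max r ‖z - y‖ ^ α * ‖z - y‖ ^ β`, which is integrable near `y` because
`β > -d` and at infinity because `α + β < -d`; symmetrically where `z` is closer to `x`.

After translating by `y` the integral depends only on `v = x - y`. Lebesgue measure is invariant
under linear isometries, which act transitively on the unit sphere, and the dilation `w ↦ c • w`
shows that the integral is homogeneous of degree `d + α + β` in `v`. Hence it equals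
`C ‖v‖ ^ (d + α + β)`, with `C` its value at a unit vector, positive because the integrand
vanishes at two points only.
-/

open MeasureTheory Metric Module Set

lemma norm_sub_rpow_mul_norm_sub_rpow_le {E : Type*} [NormedAddCommGroup E] {x y z : E}
    (hxy : x ≠ y) {α : ℝ} (hα : α ≤ 0) (β : ℝ) (h : ‖z - y‖ ≤ ‖x - z‖) :
    ‖x - z‖ ^ α * ‖z - y‖ ^ β ≤ max (‖x - y‖ / 2) ‖z - y‖ ^ α * ‖z - y‖ ^ β := by
  have hxy' : 0 < ‖x - y‖ / 2 := by simpa [sub_eq_zero] using hxy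
  have hmax : max (‖x - y‖ / 2) ‖z - y‖ ≤ ‖x - z‖ := by
    refine max_le ?_ h
    linarith [norm_sub_le_norm_sub_add_norm_sub x z y]
  exact mul_le_mul_of_nonneg_right
    (Real.rpow_le_rpow_of_nonpos (lt_max_of_lt_left hxy') hmax hα) (by positivity)

section Integrability

variable {E : Type*} [NormedAddCommGroup E] [NormedSpace ℝ E] [FiniteDimensional ℝ E]
  [MeasurableSpace E] [BorelSpace E] (μ : Measure E) [μ.IsAddHaarMeasure]

lemma integrableOn_compl_closedBall_norm_rpow {r s : ℝ} (hr : 0 < r)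
    (hs : s < -(finrank ℝ E : ℝ)) :
    IntegrableOn (fun v : E => ‖v‖ ^ s) (closedBall 0 r)ᶜ μ := by
  set K : ℝ := 1 + r⁻¹
  have hK : 0 < K := by positivity
  refine Integrable.mono' (((integrable_one_add_norm (μ := μ) (r := -s) (by linarith)).const_mul
    (K ^ (-s))).integrableOn)
    (by fun_prop : Measurable fun v : E => ‖v‖ ^ s).aestronglyMeasurable ?_
  refine (ae_restrict_iff' measurableSet_closedBall.compl).2 (ae_of_all _ fun v hv => ?_)
  have hrv : r < ‖v‖ := by simpa using hv
  have hv0 : 0 < ‖v‖ := hr.trans hrv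
  have hle : 1 + ‖v‖ ≤ K * ‖v‖ := by
    have : 1 ≤ r⁻¹ * ‖v‖ := by rw [inv_mul_eq_div, one_le_div hr]; exact hrv.le
    linarith
  rw [Real.norm_of_nonneg (by positivity), neg_neg]
  calc ‖v‖ ^ s = K ^ (-s) * (K * ‖v‖) ^ s := by
        rw [Real.mul_rpow hK.le hv0.le, Real.rpow_neg hK.le, inv_mul_cancel_left₀
          (Real.rpow_pos_of_pos hK s).ne']
    _ ≤ K ^ (-s) * (1 + ‖v‖) ^ s :=
        mul_le_mul_of_nonneg_left (Real.rpow_le_rpow_of_nonpos (by positivity) hle (by linarith))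
          (by positivity)

lemma integrable_max_rpow_mul_rpow (hd : 1 ≤ finrank ℝ E) {r α β : ℝ} (hr : 0 < r)
    (hβ : -(finrank ℝ E : ℝ) < β) (hαβ : α + β < -(finrank ℝ E : ℝ)) :
    Integrable (fun v : E => max r ‖v‖ ^ α * ‖v‖ ^ β) μ := by
  have hloc : LocallyIntegrable (fun v : E => ‖v‖ ^ β) μ :=
    locallyIntegrable_of_norm_le_rpow (C := 1) (α := -β) hd (by linarith)
      (ae_of_all _ fun v => by simp [Real.norm_of_nonneg (Real.rpow_nonneg (norm_nonneg v) β)])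
      (by fun_prop : Measurable fun v : E => ‖v‖ ^ β).aestronglyMeasurable
  have hball : IntegrableOn (fun v : E => r ^ α * ‖v‖ ^ β) (closedBall 0 r) μ :=
    (hloc.integrableOn_isCompact (isCompact_closedBall 0 r)).const_mul _
  rw [← integrableOn_univ, ← union_compl_self (closedBall 0 r)]
  refine IntegrableOn.union (hball.congr_fun (fun v hv => ?_) measurableSet_closedBall)
    ((integrableOn_compl_closedBall_norm_rpow μ hr hαβ).congr_fun (fun v hv => ?_)
      measurableSet_closedBall.compl)
  · rw [max_eq_left (mem_closedBall_zero_iff.1 hv)]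
  · have hrv : r < ‖v‖ := by simpa using hv
    simp only [max_eq_right hrv.le, Real.rpow_add (hr.trans hrv)]

lemma integrable_norm_sub_rpow_mul_norm_sub_rpow {x y : E} (hxy : x ≠ y) {α β : ℝ}
    (hα : -(finrank ℝ E : ℝ) < α) (hβ : -(finrank ℝ E : ℝ) < β)
    (hαβ : α + β < -(finrank ℝ E : ℝ)) :
    Integrable (fun z => ‖x - z‖ ^ α * ‖z - y‖ ^ β) μ := by
  have : Nontrivial E := ⟨x, y, hxy⟩
  have hd : 1 ≤ finrank ℝ E := finrank_pos
  have hr : 0 < ‖x - y‖ / 2 := by simpa [sub_eq_zero] using hxy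
  have hnear_y := integrable_max_rpow_mul_rpow μ hd hr hβ hαβ
  have hnear_x := integrable_max_rpow_mul_rpow (α := β) μ hd hr hα (by linarith)
  refine ((hnear_y.comp_sub_right y).add (hnear_x.comp_sub_left x)).mono'
    (by fun_prop : Measurable fun z => ‖x - z‖ ^ α * ‖z - y‖ ^ β).aestronglyMeasurable
    (ae_of_all _ fun z => ?_)
  rw [Real.norm_of_nonneg (by positivity)]
  rcases le_total ‖z - y‖ ‖x - z‖ with h | h
  · exact (norm_sub_rpow_mul_norm_sub_rpow_le hxy (by linarith) β h).trans
      (le_add_of_nonneg_right (by positivity))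
  · rw [← norm_sub_rev z x, ← norm_sub_rev y z] at h
    have := norm_sub_rpow_mul_norm_sub_rpow_le hxy.symm (by linarith : β ≤ 0) α h
    rw [norm_sub_rev y z, norm_sub_rev z x, norm_sub_rev y x, mul_comm] at this
    exact this.trans (le_add_of_nonneg_left (by positivity))

lemma integral_norm_sub_rpow_mul_norm_rpow_pos {e : E} (he : e ≠ 0) {α β : ℝ}
    (hα : -(finrank ℝ E : ℝ) < α) (hβ : -(finrank ℝ E : ℝ) < β)
    (hαβ : α + β < -(finrank ℝ E : ℝ)) :
    0 < ∫ w, ‖e - w‖ ^ α * ‖w‖ ^ β ∂μ := by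
  have hint : Integrable (fun w => ‖e - w‖ ^ α * ‖w‖ ^ β) μ := by
    simpa using integrable_norm_sub_rpow_mul_norm_sub_rpow μ he hα hβ hαβ
  refine (integral_pos_iff_support_of_nonneg (fun w => by positivity) hint).2 ?_
  have hU : IsOpen {w : E | w ≠ 0 ∧ w ≠ e} := (isOpen_ne (x := 0)).inter isOpen_ne
  refine (hU.measure_pos μ ⟨-e, neg_ne_zero.2 he, ?_⟩).trans_le (measure_mono ?_)
  · simpa [neg_eq_iff_add_eq_zero, ← two_smul ℝ e] using he
  · rintro w ⟨hw0, hwe⟩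
    exact (mul_pos (Real.rpow_pos_of_pos (norm_pos_iff.2 (sub_ne_zero.2 (Ne.symm hwe))) α)
      (Real.rpow_pos_of_pos (norm_pos_iff.2 hw0) β)).ne'

end Integrability

section Homogeneity

variable {E : Type*} [NormedAddCommGroup E] [MeasurableSpace E]
  (μ : Measure E) (α β : ℝ)

lemma integral_norm_sub_rpow_mul_norm_sub_rpow_eq_sub [MeasurableAdd E] [μ.IsAddRightInvariant]
    (x y : E) :
    ∫ z, ‖x - z‖ ^ α * ‖z - y‖ ^ β ∂μ = ∫ w, ‖(x - y) - w‖ ^ α * ‖w‖ ^ β ∂μ := by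
  rw [← integral_sub_right_eq_self (fun w => ‖(x - y) - w‖ ^ α * ‖w‖ ^ β) y]
  simp only [sub_sub_sub_cancel_right]

lemma integral_norm_smul_sub_rpow_mul_norm_rpow [NormedSpace ℝ E] [FiniteDimensional ℝ E]
    [BorelSpace E] [μ.IsAddHaarMeasure] {c : ℝ} (hc : 0 < c) (v : E) :
    ∫ w, ‖c • v - w‖ ^ α * ‖w‖ ^ β ∂μ =
      c ^ ((finrank ℝ E : ℝ) + α + β) * ∫ w, ‖v - w‖ ^ α * ‖w‖ ^ β ∂μ := by
  have hscale := Measure.integral_comp_smul_of_nonneg μ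
    (fun w => ‖c • v - w‖ ^ α * ‖w‖ ^ β) c (hR := hc.le)
  have hpt : ∀ w : E, ‖c • v - c • w‖ ^ α * ‖c • w‖ ^ β =
      c ^ (α + β) * (‖v - w‖ ^ α * ‖w‖ ^ β) := fun w => by
    rw [← smul_sub, norm_smul, norm_smul, Real.norm_of_nonneg hc.le,
      Real.mul_rpow hc.le (norm_nonneg _), Real.mul_rpow hc.le (norm_nonneg _),
      Real.rpow_add hc]
    ring
  simp only [hpt, integral_const_mul, smul_eq_mul] at hscale
  rw [eq_inv_mul_iff_mul_eq₀ (pow_ne_zero _ hc.ne')] at hscale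
  rw [← hscale, add_assoc, Real.rpow_add hc (finrank ℝ E : ℝ), Real.rpow_natCast]
  ring

end Homogeneity

section Isotropy

variable {E : Type*} [NormedAddCommGroup E] [InnerProductSpace ℝ E] [FiniteDimensional ℝ E]
  [MeasurableSpace E] [BorelSpace E] (α β : ℝ)

lemma integral_norm_linearIsometryEquiv_sub_rpow_mul_norm_rpow (T : E ≃ₗᵢ[ℝ] E) (v : E) :
    ∫ w, ‖T v - w‖ ^ α * ‖w‖ ^ β = ∫ w, ‖v - w‖ ^ α * ‖w‖ ^ β := by
  rw [← T.measurePreserving.integral_comp T.toHomeomorph.measurableEmbedding]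
  simp only [← map_sub, LinearIsometryEquiv.norm_map]

lemma integral_norm_sub_rpow_mul_norm_rpow_eq_norm_rpow_mul {e v : E} (he : ‖e‖ = 1)
    (hv : v ≠ 0) :
    ∫ w, ‖v - w‖ ^ α * ‖w‖ ^ β =
      ‖v‖ ^ ((finrank ℝ E : ℝ) + α + β) * ∫ w, ‖e - w‖ ^ α * ‖w‖ ^ β := by
  set u : E := (‖v‖⁻¹ : ℝ) • v
  have hu : ‖e‖ = ‖u‖ := by
    rw [he, norm_smul, norm_inv, norm_norm, inv_mul_cancel₀ (norm_ne_zero_iff.2 hv)]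
  have hv_eq : v = ‖v‖ • (ℝ ∙ (e - u))ᗮ.reflection e := by
    rw [Submodule.reflection_sub hu, smul_inv_smul₀ (norm_ne_zero_iff.2 hv)]
  conv_lhs => rw [hv_eq]
  rw [integral_norm_smul_sub_rpow_mul_norm_rpow _ _ _ (norm_pos_iff.2 hv),
    integral_norm_linearIsometryEquiv_sub_rpow_mul_norm_rpow]

end Isotropy

theorem exists_pos_integral_norm_sub_rpow_mul_norm_sub_rpow_eq {E : Type*} [NormedAddCommGroup E]
    [InnerProductSpace ℝ E] [FiniteDimensional ℝ E] [MeasurableSpace E] [BorelSpace E]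
    {α β : ℝ} (hα : -(finrank ℝ E : ℝ) < α) (hβ : -(finrank ℝ E : ℝ) < β)
    (hαβ : α + β < -(finrank ℝ E : ℝ)) :
    ∃ C : ℝ, 0 < C ∧ ∀ x y : E, x ≠ y →
      Integrable (fun z => ‖x - z‖ ^ α * ‖z - y‖ ^ β) ∧
      ∫ z, ‖x - z‖ ^ α * ‖z - y‖ ^ β = C * ‖x - y‖ ^ ((finrank ℝ E : ℝ) + α + β) := by
  have : Nontrivial E := Module.nontrivial_of_finrank_pos (R := ℝ)
    (by exact_mod_cast (by linarith : (0 : ℝ) < finrank ℝ E))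
  obtain ⟨e, he⟩ := exists_norm_eq E zero_le_one
  have he0 : e ≠ 0 := norm_ne_zero_iff.1 (he ▸ one_ne_zero)
  refine ⟨_, integral_norm_sub_rpow_mul_norm_rpow_pos volume he0 hα hβ hαβ, fun x y hxy =>
    ⟨integrable_norm_sub_rpow_mul_norm_sub_rpow volume hxy hα hβ hαβ, ?_⟩⟩
  rw [integral_norm_sub_rpow_mul_norm_sub_rpow_eq_sub,
    integral_norm_sub_rpow_mul_norm_rpow_eq_norm_rpow_mul α β he (sub_ne_zero.2 hxy), mul_comm]

theorem riesz_kernel_composition_general (N : ℕ) (a b : ℝ)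
    (ha : 0 < a) (hb : 0 < b) (hab : a + b < (N : ℝ)) :
    ∃ C : ℝ, 0 < C ∧
      ∀ x y : EuclideanSpace ℝ (Fin N), x ≠ y →
        Integrable (fun z : EuclideanSpace ℝ (Fin N) =>
          ‖x - z‖ ^ (a - (N : ℝ)) * ‖z - y‖ ^ (b - (N : ℝ))) ∧
        ∫ z : EuclideanSpace ℝ (Fin N),
            ‖x - z‖ ^ (a - (N : ℝ)) * ‖z - y‖ ^ (b - (N : ℝ)) =
          C * ‖x - y‖ ^ (a + b - (N : ℝ)) := by
  have hdim : (finrank ℝ (EuclideanSpace ℝ (Fin N)) : ℝ) = N := by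
    rw [finrank_euclideanSpace_fin]
  obtain ⟨C, hC, hK⟩ := exists_pos_integral_norm_sub_rpow_mul_norm_sub_rpow_eq
    (E := EuclideanSpace ℝ (Fin N)) (α := a - N) (β := b - N)
    (by rw [hdim]; linarith) (by rw [hdim]; linarith) (by rw [hdim]; linarith)
  refine ⟨C, hC, fun x y hxy => ?_⟩
  rw [hdim, show (N : ℝ) + (a - N) + (b - N) = a + b - N by ring] at hK
  exact hK x y hxy

/-- Composition (semigroup) property of Riesz kernels: for `N ≥ 1`
and `a, b > 0` with `a + b < N`, there is a constant `C > 0`, depending only on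
`N, a, b`, such that for all `x ≠ y` in `ℝ^N`, the function
`z ↦ ‖x − z‖^(a−N) ‖z − y‖^(b−N)` is integrable and
`∫ ‖x − z‖^(a−N) ‖z − y‖^(b−N) dz = C ‖x − y‖^(a+b−N)`. -/
theorem riesz_kernel_composition (N : ℕ) (hN : 1 ≤ N) (a b : ℝ)
    (ha : 0 < a) (hb : 0 < b) (hab : a + b < (N : ℝ)) :
    ∃ C : ℝ, 0 < C ∧
      ∀ x y : EuclideanSpace ℝ (Fin N), x ≠ y →
        Integrable (fun z : EuclideanSpace ℝ (Fin N) =>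
          ‖x - z‖ ^ (a - (N : ℝ)) * ‖z - y‖ ^ (b - (N : ℝ))) ∧
        ∫ z : EuclideanSpace ℝ (Fin N),
            ‖x - z‖ ^ (a - (N : ℝ)) * ‖z - y‖ ^ (b - (N : ℝ)) =
          C * ‖x - y‖ ^ (a + b - (N : ℝ)) :=
  riesz_kernel_composition_general N a b ha hb hab
end
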